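/- arXiv:2504.12567 — 4 statements merged into one kernel-verified Lean document; each statement's English description precedes it below -/
import Mathlib

section
/- If a map Φ : ℝ^{2d} × ℝ^{2d} → ℝ^{2d} × ℝ^{2d} is symplectic with respect to the extended symplectic form dp∧dq + dx∧dy, and Φ maps the diagonal submanifold N = {(p,p,q,q)} into itself, then the induced map Φ̃ : ℝ^{2d} → ℝ^{2d} defined by Φ(p,p,q,q) = (Φ̃₁(p,q), Φ̃₁(p,q), Φ̃₂(p,q), Φ̃₂(p,q)) is symplectic with respect to the standard form dp∧dq. -/
open scoped BigOperators

/-- Vectors in `ℝ^d`. -/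
abbrev V (d : ℕ) := Fin d → ℝ

/-- The standard symplectic form `dp ∧ dq` on `ℝ^{2d}`, coordinates `(p, q)`. -/
def ω2 (d : ℕ) (u v : V d × V d) : ℝ :=
  ∑ i, (u.1 i * v.2 i - u.2 i * v.1 i)

/-- The extended symplectic form `dp ∧ dq + dx ∧ dy` on `ℝ^{4d}`,
coordinates ordered `(p, x, q, y)`. -/
def ω4 (d : ℕ) (u v : V d × V d × V d × V d) : ℝ :=
  ∑ i, (u.1 i * v.2.2.1 i - u.2.2.1 i * v.1 i) +
    ∑ i, (u.2.1 i * v.2.2.2 i - u.2.2.2 i * v.2.1 i)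

/-!
Write `ι (p, q) = (p, p, q, q)`; the hypothesis on `N` says `Φ ∘ ι = ι ∘ Φt`. Differentiating
gives `DΦ ∘ ι = ι ∘ DΦt`, and since `ι` pulls `ω4` back to `2 ω2`,
`2 ω2 (DΦt u) (DΦt v) = ω4 (DΦ (ι u)) (DΦ (ι v)) = ω4 (ι u) (ι v) = 2 ω2 u v`.
`Φt = π ∘ Φ ∘ ι` for the projection `π (p, x, q, y) = (p, q)`, so `Φt` inherits
differentiability from `Φ`.
-/

section Intertwining

variable {𝕜 E F : Type*} [NontriviallyNormedField 𝕜]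
  [NormedAddCommGroup E] [NormedSpace 𝕜 E] [NormedAddCommGroup F] [NormedSpace 𝕜 F]
  {L : E →L[𝕜] F} {Φ : F → F} {Ψ : E → E} {z : E}

theorem differentiableAt_of_comp_eq_comp {P : F →L[𝕜] E} (hPL : ∀ w, P (L w) = w)
    (hΦ : DifferentiableAt 𝕜 Φ (L z)) (h : Φ ∘ L = L ∘ Ψ) : DifferentiableAt 𝕜 Ψ z := by
  have hΨ : Ψ = P ∘ Φ ∘ L := funext fun w => by
    change Ψ w = P ((Φ ∘ L) w)
    rw [h, Function.comp_apply, hPL]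
  rw [hΨ]
  exact P.differentiableAt.comp z (hΦ.comp z L.differentiableAt)

theorem fderiv_comp_eq_comp_fderiv (hΦ : DifferentiableAt 𝕜 Φ (L z))
    (hΨ : DifferentiableAt 𝕜 Ψ z) (h : Φ ∘ L = L ∘ Ψ) :
    (fderiv 𝕜 Φ (L z)).comp L = L.comp (fderiv 𝕜 Ψ z) := by
  have hz := congrArg (fderiv 𝕜 · z) h
  simpa only [fderiv_comp z hΦ L.differentiableAt, fderiv_comp z L.differentiableAt hΨ,
    ContinuousLinearMap.fderiv] using hz

end Intertwining

theorem pullback_form_eq {α β R : Type*} [MonoidWithZero R] [IsLeftCancelMulZero R]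
    {B : β → β → R} {b : α → α → R} {L : α → β} {A : β → β} {T : α → α} {c : R}
    (hc : c ≠ 0) (hL : ∀ u v, B (L u) (L v) = c * b u v) (hA : ∀ u v, B (A u) (A v) = B u v)
    (hAT : ∀ u, A (L u) = L (T u)) (u v : α) : b (T u) (T v) = b u v := by
  refine mul_left_cancel₀ hc ?_
  rw [← hL, ← hL, ← hAT, ← hAT, hA]

namespace Diagonal

variable (d : ℕ)

noncomputable def ι : (V d × V d) →L[ℝ] (V d × V d × V d × V d) :=
  .prod (.fst ℝ _ _) (.prod (.fst ℝ _ _) (.prod (.snd ℝ _ _) (.snd ℝ _ _)))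

noncomputable def π : (V d × V d × V d × V d) →L[ℝ] (V d × V d) :=
  .prod (.fst ℝ _ _) ((ContinuousLinearMap.fst ℝ _ _).comp
    ((ContinuousLinearMap.snd ℝ _ _).comp (.snd ℝ _ _)))

theorem ι_apply (w : V d × V d) : ι d w = (w.1, w.1, w.2, w.2) := rfl

theorem π_ι (w : V d × V d) : π d (ι d w) = w := rfl

theorem ω4_ι (u v : V d × V d) : ω4 d (ι d u) (ι d v) = 2 * ω2 d u v := by
  simp only [ω4, ω2, ι_apply]
  ring

end Diagonal

theorem stmt0_general (d : ℕ)
    (Φ : V d × V d × V d × V d → V d × V d × V d × V d)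
    (Φt : V d × V d → V d × V d)
    (hΦdiff : Differentiable ℝ Φ)
    (hΦsymp : ∀ z u v, ω4 d (fderiv ℝ Φ z u) (fderiv ℝ Φ z v) = ω4 d u v)
    (hdiag : ∀ p q : V d,
      Φ (p, p, q, q) = ((Φt (p, q)).1, (Φt (p, q)).1, (Φt (p, q)).2, (Φt (p, q)).2)) :
    ∀ z u v, ω2 d (fderiv ℝ Φt z u) (fderiv ℝ Φt z v) = ω2 d u v := by
  intro z
  have hcomm : Φ ∘ Diagonal.ι d = Diagonal.ι d ∘ Φt := funext fun w => hdiag w.1 w.2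
  have hΦtdiff := differentiableAt_of_comp_eq_comp (z := z) (Diagonal.π_ι d) (hΦdiff _) hcomm
  have hderiv := fderiv_comp_eq_comp_fderiv (hΦdiff _) hΦtdiff hcomm
  exact pullback_form_eq two_ne_zero (Diagonal.ω4_ι d) (hΦsymp _)
    (fun u => congrArg (· u) hderiv)

/-- If a symplectic map `Φ` of the extended phase space maps the diagonal
submanifold `N = {(p,p,q,q)}` into itself, then the induced map `Φt` on the
original phase space is symplectic. -/
theorem stmt0 (d : ℕ)
    (Φ : V d × V d × V d × V d → V d × V d × V d × V d)
    (Φt : V d × V d → V d × V d)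
    (hΦdiff : Differentiable ℝ Φ)
    (hΦsymp : ∀ z u v, ω4 d (fderiv ℝ Φ z u) (fderiv ℝ Φ z v) = ω4 d u v)
    (hΦtdiff : Differentiable ℝ Φt)
    (hdiag : ∀ p q : V d,
      Φ (p, p, q, q) = ((Φt (p, q)).1, (Φt (p, q)).1, (Φt (p, q)).2, (Φt (p, q)).2)) :
    ∀ z u v, ω2 d (fderiv ℝ Φt z u) (fderiv ℝ Φt z v) = ω2 d u v :=
  stmt0_general d Φ Φt hΦdiff hΦsymp hdiag
end

section
/- Let d = 1 and let p, x, q, y ∈ ℝ with p² + x² ≠ 0 and q̃ ≠ 0 where q̃ = ξ q + (1-ξ) y for some ξ ∈ ℝ. Then there exists a symplectic matrix M ∈ ℝ^{4×4} such that M (p, x, q, y)ᵀ = (p̃, p̃, q̃, q̃)ᵀ, where p̃ = λ p + (1-λ) x for arbitrary given λ ∈ ℝ. -/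
open Matrix

def Jhat : Matrix (Fin 2 ⊕ Fin 2) (Fin 2 ⊕ Fin 2) ℝ :=
  Matrix.fromBlocks 0 1 (-1) 0

lemma symp_upper (T : Matrix (Fin 2) (Fin 2) ℝ) (h : Tᵀ = T) :
    (fromBlocks 1 T 0 1)ᵀ * Jhat * fromBlocks 1 T 0 1 = Jhat := by
  simp [Jhat, fromBlocks_transpose, fromBlocks_multiply, h]

lemma symp_lower (S : Matrix (Fin 2) (Fin 2) ℝ) (h : Sᵀ = S) :
    (fromBlocks 1 0 S 1)ᵀ * Jhat * fromBlocks 1 0 S 1 = Jhat := by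
  simp [Jhat, fromBlocks_transpose, fromBlocks_multiply, h]

/-- Case I of Theorem 2 (d = 1): if `p² + x² ≠ 0` and `q̃ = ξq + (1-ξ)y ≠ 0`,
then for arbitrary `λ` there is a symplectic matrix `M` sending `(p, x, q, y)`
to `(p̃, p̃, q̃, q̃)` with `p̃ = λp + (1-λ)x`. -/
theorem stmt7 (p x q y l ξ : ℝ)
    (hpx : p ^ 2 + x ^ 2 ≠ 0) (hq : ξ * q + (1 - ξ) * y ≠ 0) :
    ∃ M : Matrix (Fin 2 ⊕ Fin 2) (Fin 2 ⊕ Fin 2) ℝ,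
      Mᵀ * Jhat * M = Jhat ∧
      M.mulVec (Sum.elim ![p, x] ![q, y]) =
        Sum.elim ![l * p + (1 - l) * x, l * p + (1 - l) * x]
          ![ξ * q + (1 - ξ) * y, ξ * q + (1 - ξ) * y] := by
  set Q : ℝ := ξ * q + (1 - ξ) * y with hQ
  set P : ℝ := l * p + (1 - l) * x with hP
  set a : ℝ := p ^ 2 + x ^ 2 with ha
  set s1 : ℝ := Q - q
  set s2 : ℝ := Q - y
  set c : ℝ := (s1 * p + s2 * x) / a ^ 2
  set S : Matrix (Fin 2) (Fin 2) ℝ :=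
    !![(2 * s1 * p) / a - c * p ^ 2, (s1 * x + s2 * p) / a - c * p * x;
       (s1 * x + s2 * p) / a - c * p * x, (2 * s2 * x) / a - c * x ^ 2] with hS
  set T : Matrix (Fin 2) (Fin 2) ℝ :=
    !![(P - p) / Q, 0; 0, (P - x) / Q] with hT
  have hSsymm : Sᵀ = S := by
    rw [hS]; ext i j; fin_cases i <;> fin_cases j <;> simp
  have hTsymm : Tᵀ = T := by
    rw [hT]; ext i j; fin_cases i <;> fin_cases j <;> simp
  refine ⟨fromBlocks 1 T 0 1 * fromBlocks 1 0 S 1, ?_, ?_⟩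
  · rw [Matrix.transpose_mul]
    calc (fromBlocks 1 0 S 1)ᵀ * (fromBlocks 1 T 0 1)ᵀ * Jhat *
          (fromBlocks 1 T 0 1 * fromBlocks 1 0 S 1)
        = (fromBlocks 1 0 S 1)ᵀ *
            ((fromBlocks 1 T 0 1)ᵀ * Jhat * fromBlocks 1 T 0 1) *
            fromBlocks 1 0 S 1 := by noncomm_ring
      _ = Jhat := by rw [symp_upper T hTsymm, symp_lower S hSsymm]
  · have hSv : S.mulVec ![p, x] = ![s1, s2] := by
      funext i
      fin_cases i <;>
        simp [hS, Matrix.mulVec, dotProduct, Fin.sum_univ_two, c] <;>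
        field_simp <;> ring
    have hTv : T.mulVec ![Q, Q] = ![P - p, P - x] := by
      funext i
      fin_cases i <;>
        simp [hT, Matrix.mulVec, dotProduct, Fin.sum_univ_two] <;>
        field_simp
    have h2 : (![s1, s2] + ![q, y] : Fin 2 → ℝ) = ![Q, Q] := by
      funext i; fin_cases i <;> simp [s1, s2]
    have hL : (fromBlocks 1 0 S 1).mulVec (Sum.elim ![p, x] ![q, y]) =
        Sum.elim ![p, x] ![Q, Q] := by
      rw [Matrix.fromBlocks_mulVec]
      simp only [Sum.elim_comp_inl, Sum.elim_comp_inr, Matrix.one_mulVec, Matrix.zero_mulVec, hSv, add_zero, h2]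
    rw [← Matrix.mulVec_mulVec, hL, Matrix.fromBlocks_mulVec]
    simp only [Sum.elim_comp_inl, Sum.elim_comp_inr, hTv, Matrix.one_mulVec, Matrix.zero_mulVec, add_zero, zero_add]
    funext i; fin_cases i <;> simp [hP]
end

section
/- The time-t flow map of H_A(p,x,q,y) = H(p,y), given by (p,x,q,y) ↦ (p, x - t·H_q(p,y), q + t·H_p(p,y), y), is symplectic for the extended form dp∧dq + dx∧dy, provided H is C². -/
/-!
The Jacobian of `ΦA` at `z` is a shear: it adds to `(dx, dq)` the image under `t` times the
Hessian `K` of `H` at `(p, y)` of the projection `(dp, dy)`. Expanding `ω4` in the standard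
basis, the defect `ω4 (DΦ u) (DΦ v) - ω4 u v` collapses to `t * (K v' u' - K u' v')` with
`u' = (u_p, u_y)`, `v' = (v_p, v_y)`, which vanishes because the second derivative of a `C²`
function is symmetric.
-/

open scoped BigOperators

/-- Partial gradient of `H(p,q)` with respect to `p`. -/
noncomputable def Hgradp (d : ℕ) (H : V d × V d → ℝ) (z : V d × V d) : V d :=
  fun i => fderiv ℝ H z (Pi.single i 1, 0)

/-- Partial gradient of `H(p,q)` with respect to `q`. -/
noncomputable def Hgradq (d : ℕ) (H : V d × V d → ℝ) (z : V d × V d) : V d :=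
  fun i => fderiv ℝ H z (0, Pi.single i 1)

/-- The time-`t` flow map of `H_A(p,x,q,y) = H(p,y)`:
`(p, x, q, y) ↦ (p, x - t H_q(p,y), q + t H_p(p,y), y)`. -/
noncomputable def ΦA (d : ℕ) (H : V d × V d → ℝ) (t : ℝ)
    (z : V d × V d × V d × V d) : V d × V d × V d × V d :=
  (z.1, z.2.1 - t • Hgradq d H (z.1, z.2.2.2),
    z.2.2.1 + t • Hgradp d H (z.1, z.2.2.2), z.2.2.2)

section

variable {d : ℕ}

lemma clm_apply_prod_eq_sum (φ : (V d × V d) →L[ℝ] ℝ) (a b : V d) :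
    φ (a, b) = ∑ i, a i * φ (Pi.single i 1, 0) + ∑ i, b i * φ (0, Pi.single i 1) := by
  have hab : (a, b) = ∑ i, a i • ((Pi.single i 1 : V d), (0 : V d)) +
      ∑ i, b i • ((0 : V d), (Pi.single i 1 : V d)) := by
    ext j <;> simp [Prod.fst_sum, Prod.snd_sum, Pi.single_apply]
  rw [hab, map_add, map_sum, map_sum]
  simp only [map_smul, smul_eq_mul]

lemma ω4_shear (φ ψ : (V d × V d) →L[ℝ] ℝ) (t : ℝ) (u v : V d × V d × V d × V d) :
    ω4 d (u.1, u.2.1 - t • (fun i => φ (0, Pi.single i 1)),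
        u.2.2.1 + t • (fun i => φ (Pi.single i 1, 0)), u.2.2.2)
      (v.1, v.2.1 - t • (fun i => ψ (0, Pi.single i 1)),
        v.2.2.1 + t • (fun i => ψ (Pi.single i 1, 0)), v.2.2.2) =
      ω4 d u v + t * (ψ (u.1, u.2.2.2) - φ (v.1, v.2.2.2)) := by
  rw [clm_apply_prod_eq_sum ψ, clm_apply_prod_eq_sum φ]
  simp only [ω4, Pi.sub_apply, Pi.add_apply, Pi.smul_apply, smul_eq_mul, Finset.mul_sum,
    ← Finset.sum_add_distrib, ← Finset.sum_sub_distrib]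
  refine Finset.sum_congr rfl fun i _ => ?_
  ring

end

section

variable {d : ℕ} {H : V d × V d → ℝ} {K : (V d × V d) →L[ℝ] (V d × V d) →L[ℝ] ℝ}

lemma hasFDerivAt_Hgradp {w : V d × V d} (hK : HasFDerivAt (fderiv ℝ H) K w) :
    HasFDerivAt (Hgradp d H)
      ((ContinuousLinearMap.pi fun i =>
        ContinuousLinearMap.apply ℝ ℝ ((Pi.single i 1 : V d), (0 : V d))).comp K) w :=
  (ContinuousLinearMap.pi fun i =>
    ContinuousLinearMap.apply ℝ ℝ ((Pi.single i 1 : V d), (0 : V d))).hasFDerivAt.comp w hK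

lemma hasFDerivAt_Hgradq {w : V d × V d} (hK : HasFDerivAt (fderiv ℝ H) K w) :
    HasFDerivAt (Hgradq d H)
      ((ContinuousLinearMap.pi fun i =>
        ContinuousLinearMap.apply ℝ ℝ ((0 : V d), (Pi.single i 1 : V d))).comp K) w :=
  (ContinuousLinearMap.pi fun i =>
    ContinuousLinearMap.apply ℝ ℝ ((0 : V d), (Pi.single i 1 : V d))).hasFDerivAt.comp w hK

lemma fderiv_ΦA_apply {t : ℝ} {z : V d × V d × V d × V d}
    (hK : HasFDerivAt (fderiv ℝ H) K (z.1, z.2.2.2)) (u : V d × V d × V d × V d) :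
    fderiv ℝ (ΦA d H t) z u =
      (u.1, u.2.1 - t • (fun i => K (u.1, u.2.2.2) (0, Pi.single i 1)),
        u.2.2.1 + t • (fun i => K (u.1, u.2.2.2) (Pi.single i 1, 0)), u.2.2.2) := by
  have hid := hasFDerivAt_id (𝕜 := ℝ) z
  have hπ := hid.fst.prodMk hid.snd.snd.snd
  have hΦ := hid.fst.prodMk
    ((hid.snd.fst.sub (((hasFDerivAt_Hgradq hK).comp z hπ).const_smul t)).prodMk
      ((hid.snd.snd.fst.add (((hasFDerivAt_Hgradp hK).comp z hπ).const_smul t)).prodMk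
        hid.snd.snd.snd))
  rw [(show HasFDerivAt (ΦA d H t) _ z from hΦ).fderiv]
  rfl

end

/-- The time-`t` flow map of `H_A(p,x,q,y) = H(p,y)` is symplectic for the
extended symplectic form, provided `H` is `C²`. -/
theorem stmt12 (d : ℕ) (H : V d × V d → ℝ) (hH : ContDiff ℝ 2 H) (t : ℝ) :
    ∀ z u v, ω4 d (fderiv ℝ (ΦA d H t) z u) (fderiv ℝ (ΦA d H t) z v) =
      ω4 d u v := by
  intro z u v
  have hK : HasFDerivAt (fderiv ℝ H) (fderiv ℝ (fderiv ℝ H) (z.1, z.2.2.2)) (z.1, z.2.2.2) :=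
    ((hH.fderiv_right (m := 1) le_rfl).differentiable one_ne_zero _).hasFDerivAt
  rw [fderiv_ΦA_apply hK, fderiv_ΦA_apply hK, ω4_shear,
    second_derivative_symmetric (fun w => (hH.differentiable two_ne_zero w).hasFDerivAt) hK,
    sub_self, mul_zero, add_zero]
end

section
/- Let Φ : ℝ^{4d} → ℝ^{4d} be a symplectic map for the extended form, and for each n define translations T_n(z) = z + c_n where c_n = (0, p_n - x_n, 0, q_n - y_n) maps the point (p_n, x_n, q_n, y_n) to (p_n, p_n, q_n, q_n). Then Ψ_n = T_{n+1} ∘ Φ ∘ T_n^{-1} is symplectic, and if Ψ_n maps (p_n,p_n,q_n,q_n) to (p_{n+1},p_{n+1},q_{n+1},q_{n+1}), the induced map (p_n,q_n) ↦ (p_{n+1},q_{n+1}) on ℝ^{2d} is symplectic. -/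
open scoped BigOperators

section PreservesForm

variable {𝕜 : Type*} [NontriviallyNormedField 𝕜]
  {E : Type*} [NormedAddCommGroup E] [NormedSpace 𝕜 E]
  {F : Type*} [NormedAddCommGroup F] [NormedSpace 𝕜 F]

variable (𝕜) in
def PreservesForm {R : Type*} (ω : E → E → R) (f : E → E) : Prop :=
  ∀ z u v, ω (fderiv 𝕜 f z u) (fderiv 𝕜 f z v) = ω u v

theorem PreservesForm.comp_sub_add_const {R : Type*} {ω : E → E → R} {f : E → E}
    (hf : PreservesForm 𝕜 ω f) (a b : E) :
    PreservesForm 𝕜 ω (fun z => f (z - a) + b) := by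
  intro z u v
  rw [fderiv_add_const, fderiv_comp_sub]
  exact hf _ u v

theorem fderiv_apply_of_comp_eq_comp {Ψ : E → E} {g : F → F} {ι : F →L[𝕜] E}
    (hcomm : ∀ w, Ψ (ι w) = ι (g w)) {z : F}
    (hΨ : DifferentiableAt 𝕜 Ψ (ι z)) (hg : DifferentiableAt 𝕜 g z) (u : F) :
    fderiv 𝕜 Ψ (ι z) (ι u) = ι (fderiv 𝕜 g z u) := by
  have hleft : HasFDerivAt (fun w => Ψ (ι w)) ((fderiv 𝕜 Ψ (ι z)).comp ι) z :=
    hΨ.hasFDerivAt.comp z ι.hasFDerivAt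
  have hright : HasFDerivAt (fun w => ι (g w)) (ι.comp (fderiv 𝕜 g z)) z :=
    ι.hasFDerivAt.comp z hg.hasFDerivAt
  simp only [hcomm] at hleft
  exact DFunLike.congr_fun (hleft.unique hright) u

theorem PreservesForm.of_comp_eq_comp {ω : E → E → 𝕜} {ω' : F → F → 𝕜} {Ψ : E → E} {g : F → F}
    {ι : F →L[𝕜] E} {c : 𝕜} (hc : c ≠ 0) (hι : ∀ u v, ω (ι u) (ι v) = c * ω' u v)
    (hΨ : PreservesForm 𝕜 ω Ψ) (hΨdiff : Differentiable 𝕜 Ψ) (hgdiff : Differentiable 𝕜 g)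
    (hcomm : ∀ w, Ψ (ι w) = ι (g w)) :
    PreservesForm 𝕜 ω' g := by
  intro z u v
  have hderiv := fderiv_apply_of_comp_eq_comp hcomm (hΨdiff (ι z)) (hgdiff z)
  have h := hΨ (ι z) (ι u) (ι v)
  rw [hderiv, hderiv, hι, hι] at h
  exact mul_left_cancel₀ hc h

end PreservesForm

section Diagonal

variable (d : ℕ)

def diagEmbedding : V d × V d →L[ℝ] V d × V d × V d × V d :=
  (ContinuousLinearMap.fst ℝ (V d) (V d)).prod
    ((ContinuousLinearMap.fst ℝ (V d) (V d)).prod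
      ((ContinuousLinearMap.snd ℝ (V d) (V d)).prod (ContinuousLinearMap.snd ℝ (V d) (V d))))

variable {d}

@[simp]
theorem diagEmbedding_apply (w : V d × V d) : diagEmbedding d w = (w.1, w.1, w.2, w.2) := rfl

theorem ω4_diagEmbedding (u v : V d × V d) :
    ω4 d (diagEmbedding d u) (diagEmbedding d v) = 2 * ω2 d u v := by
  simp only [diagEmbedding_apply, ω4, ω2]
  ring

end Diagonal

/-- Theorem 6 of the paper: conjugating a symplectic extended phase space map
`Φ` by the translations `T_n : z ↦ z + (0, pₙ - xₙ, 0, qₙ - yₙ)` gives a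
symplectic map `Ψₙ = T_{n+1} ∘ Φ ∘ Tₙ⁻¹`; if `Ψₙ` maps the diagonal into the
diagonal, sending `(pₙ,pₙ,qₙ,qₙ)` to `(p_{n+1},p_{n+1},q_{n+1},q_{n+1})`, the
induced map `(pₙ,qₙ) ↦ (p_{n+1},q_{n+1})` on the original phase space is
symplectic. -/
theorem stmt14 (d : ℕ)
    (Φ : V d × V d × V d × V d → V d × V d × V d × V d)
    (hΦdiff : Differentiable ℝ Φ)
    (hΦsymp : ∀ z u v, ω4 d (fderiv ℝ Φ z u) (fderiv ℝ Φ z v) = ω4 d u v)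
    (p x q y : ℕ → V d) (n : ℕ)
    (Ψ : V d × V d × V d × V d → V d × V d × V d × V d)
    (hΨ : Ψ = fun z =>
      Φ (z - (0, p n - x n, 0, q n - y n)) +
        (0, p (n + 1) - x (n + 1), 0, q (n + 1) - y (n + 1)))
    (hstep : Ψ (p n, p n, q n, q n) = (p (n + 1), p (n + 1), q (n + 1), q (n + 1)))
    (Φt : V d × V d → V d × V d) (hΦtdiff : Differentiable ℝ Φt)
    (hdiag : ∀ a b : V d,
      Ψ (a, a, b, b) = ((Φt (a, b)).1, (Φt (a, b)).1, (Φt (a, b)).2, (Φt (a, b)).2)) :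
    (∀ z u v, ω4 d (fderiv ℝ Ψ z u) (fderiv ℝ Ψ z v) = ω4 d u v) ∧
    (∀ z u v, ω2 d (fderiv ℝ Φt z u) (fderiv ℝ Φt z v) = ω2 d u v) ∧
    Φt (p n, q n) = (p (n + 1), q (n + 1)) := by
  have hΦ : PreservesForm ℝ (ω4 d) Φ := hΦsymp
  have hΨsymp : PreservesForm ℝ (ω4 d) Ψ := by
    subst hΨ
    exact hΦ.comp_sub_add_const _ _
  have hΨdiff : Differentiable ℝ Ψ := by
    subst hΨ
    exact (hΦdiff.comp (differentiable_id.sub_const _)).add_const _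
  have hcomm : ∀ w, Ψ (diagEmbedding d w) = diagEmbedding d (Φt w) := fun w => hdiag w.1 w.2
  refine ⟨hΨsymp, ?_, ?_⟩
  · exact PreservesForm.of_comp_eq_comp two_ne_zero ω4_diagEmbedding hΨsymp hΨdiff hΦtdiff hcomm
  · have h := (hdiag (p n) (q n)).symm.trans hstep
    simp only [Prod.mk.injEq] at h
    exact Prod.ext h.1 h.2.2.1
end
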